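/- arXiv:2403.06029 — 2 statements merged into one kernel-verified Lean document; each statement's English description precedes it below -/
import Mathlib

section
/- Let X and Y be real normed (Banach) spaces, K a nonempty bounded subset of X, ℓ₀ ∈ Y, π₀ : X → Y a bounded linear operator, and F : X → Y a map such that F(K) is bounded in Y. For the operator π(x) = ℓ₀ + π₀(x) + F(x) and all natural numbers n and m, the widths satisfy d_{n+m}(π(K))_Y ≤ ‖π₀‖ · d_n(K)_X + D_m(F(K))_Y. -/
/-!
If `W = w₀ + E` is an affine subspace of dimension at most `n` and `V` a linear subspace of
dimension at most `m`, the affine subspace `ℓ₀ + π₀ w₀ + (π₀ E + V)` has dimension at most `n + m`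
and contains `ℓ₀ + π₀ ξ + η` for all `ξ ∈ W`, `η ∈ V`. Approximating `x` by `ξ` and `F x` by `η`
puts `π x` within `‖π₀‖ dist(x, W) + dist(F x, V)` of it; take the infimum over `W` and `V`.
-/

/-- Deviation of a set `K` from a set `W`: `sup_{x ∈ K} inf_{ξ ∈ W} ‖x - ξ‖`. -/
noncomputable def setDeviation {X : Type*} [NormedAddCommGroup X] (K W : Set X) : ℝ :=
  sSup ((fun x => Metric.infDist x W) '' K)

/-- The affine Kolmogorov `n`-width `d_n(K)_X`. -/
noncomputable def affKolWidth {X : Type*} [NormedAddCommGroup X] [NormedSpace ℝ X]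
    (n : ℕ) (K : Set X) : ℝ :=
  sInf { r : ℝ | ∃ W : AffineSubspace ℝ X, (W : Set X).Nonempty ∧
    FiniteDimensional ℝ W.direction ∧ Module.finrank ℝ W.direction ≤ n ∧
    r = setDeviation K (W : Set X) }

/-- The Kolmogorov `n`-width `D_n(K)_X`. -/
noncomputable def linKolWidth {X : Type*} [NormedAddCommGroup X] [NormedSpace ℝ X]
    (n : ℕ) (K : Set X) : ℝ :=
  sInf { r : ℝ | ∃ W : Submodule ℝ X,
    FiniteDimensional ℝ W ∧ Module.finrank ℝ W ≤ n ∧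
    r = setDeviation K (W : Set X) }

open Metric Set Pointwise

theorem Metric.infDist_add_le_add {E : Type*} [SeminormedAddCommGroup E] (a b : E) (s t : Set E) :
    infDist (a + b) (s + t) ≤ infDist a s + infDist b t := by
  rcases s.eq_empty_or_nonempty with rfl | hs
  · simpa using infDist_nonneg
  rcases t.eq_empty_or_nonempty with rfl | ht
  · simpa using infDist_nonneg
  rw [← sub_le_iff_le_add, le_infDist hs]
  intro y hy
  rw [sub_le_comm, le_infDist ht]
  intro z hz
  rw [sub_le_iff_le_add']
  exact (infDist_le_dist_of_mem (add_mem_add hy hz)).trans (dist_add_add_le a b y z)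

theorem LipschitzWith.infDist_image_le {α β : Type*} [PseudoMetricSpace α] [PseudoMetricSpace β]
    {K : NNReal} {f : α → β} (hf : LipschitzWith K f) (x : α) (s : Set α) :
    infDist (f x) (f '' s) ≤ K * infDist x s := by
  rcases s.eq_empty_or_nonempty with rfl | hs
  · simp
  have : Nonempty s := hs.to_subtype
  rw [infDist_eq_iInf (x := x), Real.mul_iInf_of_nonneg K.coe_nonneg]
  exact le_ciInf fun y =>
    (infDist_le_dist_of_mem (mem_image_of_mem f y.2)).trans (hf.dist_le_mul x y)

section Deviation

variable {X : Type*} [NormedAddCommGroup X]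

lemma setDeviation_nonneg (K W : Set X) : 0 ≤ setDeviation K W :=
  Real.sSup_nonneg (by rintro r ⟨x, _, rfl⟩; exact infDist_nonneg)

lemma infDist_le_setDeviation {K W : Set X} (hW : W.Nonempty) (hK : Bornology.IsBounded K)
    {x : X} (hx : x ∈ K) : infDist x W ≤ setDeviation K W := by
  obtain ⟨w₀, hw₀⟩ := hW
  obtain ⟨r, hr⟩ := hK.subset_closedBall w₀
  refine le_csSup ⟨r, ?_⟩ ⟨x, hx, rfl⟩
  rintro t ⟨y, hy, rfl⟩
  exact (infDist_le_dist_of_mem hw₀).trans (mem_closedBall.1 (hr hy))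

lemma setDeviation_le {K W : Set X} {c : ℝ} (hc : 0 ≤ c) (h : ∀ x ∈ K, infDist x W ≤ c) :
    setDeviation K W ≤ c :=
  Real.sSup_le (forall_mem_image.2 h) hc

end Deviation

section Widths

variable {X : Type*} [NormedAddCommGroup X] [NormedSpace ℝ X] {n : ℕ} {K : Set X}

lemma affKolWidth_le_setDeviation {W : AffineSubspace ℝ X} (hW : (W : Set X).Nonempty)
    [FiniteDimensional ℝ W.direction] (hWn : Module.finrank ℝ W.direction ≤ n) :
    affKolWidth n K ≤ setDeviation K W :=
  csInf_le ⟨0, by rintro r ⟨W, -, -, -, rfl⟩; exact setDeviation_nonneg _ _⟩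
    ⟨W, hW, inferInstance, hWn, rfl⟩

lemma le_mul_affKolWidth {t c : ℝ} (ht : 0 ≤ t)
    (h : ∀ W : AffineSubspace ℝ X, (W : Set X).Nonempty → FiniteDimensional ℝ W.direction →
      Module.finrank ℝ W.direction ≤ n → c ≤ t * setDeviation K W) :
    c ≤ t * affKolWidth n K := by
  rw [affKolWidth, ← smul_eq_mul, ← Real.sInf_smul_of_nonneg ht]
  set P := AffineSubspace.mk' (0 : X) (⊥ : Submodule ℝ X)
  have hP : P.direction = ⊥ := AffineSubspace.direction_mk' _ _
  refine le_csInf (Set.Nonempty.smul_set ⟨_, P, ⟨0, AffineSubspace.self_mem_mk' _ _⟩,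
    by rw [hP]; infer_instance, by rw [hP]; simp, rfl⟩) ?_
  rintro _ ⟨_, ⟨W, hW, hWfin, hWn, rfl⟩, rfl⟩
  exact h W hW hWfin hWn

lemma le_linKolWidth {c : ℝ}
    (h : ∀ V : Submodule ℝ X, FiniteDimensional ℝ V → Module.finrank ℝ V ≤ n →
      c ≤ setDeviation K V) :
    c ≤ linKolWidth n K := by
  refine le_csInf ⟨_, ⊥, inferInstance, by simp, rfl⟩ ?_
  rintro _ ⟨V, hVfin, hVn, rfl⟩
  exact h V hVfin hVn

end Widths

section Perturbation

variable {X Y : Type*} [NormedAddCommGroup X] [NormedSpace ℝ X]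
  [NormedAddCommGroup Y] [NormedSpace ℝ Y] (ℓ₀ : Y) (π₀ : X →L[ℝ] Y)
  {W : AffineSubspace ℝ X} {w₀ : X} (V : Submodule ℝ Y)

lemma image_add_submodule_subset_mk' (hw₀ : w₀ ∈ W) :
    (fun ξ => ℓ₀ + π₀ ξ) '' W + V ⊆
      AffineSubspace.mk' (ℓ₀ + π₀ w₀) (W.direction.map (π₀ : X →ₗ[ℝ] Y) ⊔ V) := by
  rintro _ ⟨_, ⟨ξ, hξ, rfl⟩, η, hη, rfl⟩
  change ℓ₀ + π₀ ξ + η ∈ AffineSubspace.mk' _ _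
  rw [AffineSubspace.mem_mk', vsub_eq_sub,
    show ℓ₀ + π₀ ξ + η - (ℓ₀ + π₀ w₀) = π₀ (ξ - w₀) + η by rw [map_sub]; abel]
  exact Submodule.add_mem_sup ⟨ξ - w₀, AffineSubspace.vsub_mem_direction hξ hw₀, rfl⟩ hη

lemma infDist_le_mul_infDist_add_infDist (hw₀ : w₀ ∈ W) (x : X) (y : Y) :
    infDist (ℓ₀ + π₀ x + y)
      (AffineSubspace.mk' (ℓ₀ + π₀ w₀) (W.direction.map (π₀ : X →ₗ[ℝ] Y) ⊔ V))
      ≤ ‖π₀‖ * infDist x W + infDist y V := by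
  have hne : ((fun ξ => ℓ₀ + π₀ ξ) '' W + (V : Set Y)).Nonempty :=
    (Set.Nonempty.image _ ⟨w₀, hw₀⟩).add ⟨0, V.zero_mem⟩
  have hlip : LipschitzWith ‖π₀‖₊ fun ξ => ℓ₀ + π₀ ξ := by
    simpa using (LipschitzWith.const ℓ₀).add π₀.lipschitz
  calc _ ≤ infDist (ℓ₀ + π₀ x + y) ((fun ξ => ℓ₀ + π₀ ξ) '' W + V) :=
        infDist_le_infDist_of_subset (image_add_submodule_subset_mk' ℓ₀ π₀ V hw₀) hne
    _ ≤ infDist (ℓ₀ + π₀ x) ((fun ξ => ℓ₀ + π₀ ξ) '' W) + infDist y V :=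
        infDist_add_le_add _ _ _ _
    _ ≤ ‖π₀‖ * infDist x W + infDist y V := by
        gcongr
        exact hlip.infDist_image_le x W

lemma affKolWidth_add_le_setDeviation {n m : ℕ} {K : Set X} (hK : Bornology.IsBounded K) (F : X → Y)
    (hFK : Bornology.IsBounded (F '' K)) (hW : (W : Set X).Nonempty)
    [FiniteDimensional ℝ W.direction] (hWn : Module.finrank ℝ W.direction ≤ n)
    [FiniteDimensional ℝ V] (hVm : Module.finrank ℝ V ≤ m) :
    affKolWidth (n + m) ((fun x => ℓ₀ + π₀ x + F x) '' K) ≤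
      ‖π₀‖ * setDeviation K W + setDeviation (F '' K) V := by
  obtain ⟨w₀, hw₀⟩ := hW
  have hrank : Module.finrank ℝ ↥(W.direction.map (π₀ : X →ₗ[ℝ] Y) ⊔ V) ≤ n + m :=
    (Submodule.finrank_add_le_finrank_add_finrank _ _).trans
      (add_le_add ((Submodule.finrank_map_le _ _).trans hWn) hVm)
  set W' := AffineSubspace.mk' (ℓ₀ + π₀ w₀) (W.direction.map (π₀ : X →ₗ[ℝ] Y) ⊔ V)
  have hW' : W'.direction = W.direction.map (π₀ : X →ₗ[ℝ] Y) ⊔ V :=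
    AffineSubspace.direction_mk' _ _
  have : FiniteDimensional ℝ W'.direction := by rw [hW']; infer_instance
  refine (affKolWidth_le_setDeviation ⟨_, AffineSubspace.self_mem_mk' _ _⟩
    (by rwa [hW'])).trans ?_
  have hnonneg := add_nonneg (mul_nonneg (norm_nonneg π₀) (setDeviation_nonneg K W))
    (setDeviation_nonneg (F '' K) V)
  refine setDeviation_le hnonneg (forall_mem_image.2 fun x hx => ?_)
  refine (infDist_le_mul_infDist_add_infDist ℓ₀ π₀ V hw₀ x (F x)).trans ?_
  gcongr
  · exact infDist_le_setDeviation ⟨w₀, hw₀⟩ hK hx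
  · exact infDist_le_setDeviation ⟨0, V.zero_mem⟩ hFK (mem_image_of_mem F hx)

end Perturbation

theorem stmt_12_general {X Y : Type*} [NormedAddCommGroup X] [NormedSpace ℝ X]
    [NormedAddCommGroup Y] [NormedSpace ℝ Y]
    (n m : ℕ) (K : Set X) (hKb : Bornology.IsBounded K)
    (ℓ₀ : Y) (π₀ : X →L[ℝ] Y) (F : X → Y)
    (hFK : Bornology.IsBounded (F '' K)) :
    affKolWidth (n + m) ((fun x => ℓ₀ + π₀ x + F x) '' K) ≤
      ‖π₀‖ * affKolWidth n K + linKolWidth m (F '' K) := by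
  rw [← sub_le_iff_le_add']
  refine le_linKolWidth fun V _ hVm => ?_
  rw [sub_le_iff_le_add', ← sub_le_iff_le_add]
  refine le_mul_affKolWidth (norm_nonneg π₀) fun W hW _ hWn => ?_
  linarith [affKolWidth_add_le_setDeviation ℓ₀ π₀ V hKb F hFK hW hWn hVm]

/-- Theorem 2: for `π(x) = ℓ₀ + π₀(x) + F(x)` with `F(K)` bounded, one has
`d_{n+m}(π(K))_Y ≤ ‖π₀‖ d_n(K)_X + D_m(F(K))_Y`. -/
theorem stmt_12 {X Y : Type*} [NormedAddCommGroup X] [NormedSpace ℝ X] [CompleteSpace X]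
    [NormedAddCommGroup Y] [NormedSpace ℝ Y] [CompleteSpace Y]
    (n m : ℕ) (K : Set X) (hKne : K.Nonempty) (hKb : Bornology.IsBounded K)
    (ℓ₀ : Y) (π₀ : X →L[ℝ] Y) (F : X → Y)
    (hFK : Bornology.IsBounded (F '' K)) :
    affKolWidth (n + m) ((fun x => ℓ₀ + π₀ x + F x) '' K) ≤
      ‖π₀‖ * affKolWidth n K + linKolWidth m (F '' K) :=
  stmt_12_general n m K hKb ℓ₀ π₀ F hFK
end

section
/- Let H be a real or complex Banach space, M ≥ 1 and ω ∈ ℝ constants, and S : [0,∞) → B(H) a strongly continuous family of bounded linear operators on H with ‖S(t)‖ ≤ M·e^{ωt} for all t ≥ 0. Let B : H → H be a bounded linear operator, x₀ ∈ H, T > 0, r > 0, and u ∈ L²(0,T) with ‖u‖_{L²(0,T)} ≤ r. If M·‖B‖·√T·r < 1, then the sum of the norms of the Volterra terms of order at least two satisfies Σ_{k=2}^∞ ‖V_k(T;u)‖ ≤ (M³·‖B‖²·T·e^{ωT}·r²·‖x₀‖) / (1 − M·‖B‖·√T·r); in particular the series Σ_{k=2}^∞ V_k(T;u) converges absolutely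 and its sum F(u) satisfies ‖F(u)‖ ≤ (M³·‖B‖²·T·e^{ωT}·r²·‖x₀‖) / (1 − M·‖B‖·√T·r). -/
open MeasureTheory

/-- The pair consisting of `B S(σ_k − σ_{k−1}) B ⋯ B S(σ₁) x₀` together with the last time
`σ_k` (for `k = 0`, the pair `(x₀, 0)`). -/
noncomputable def volterraChain {𝕜 H : Type*} [RCLike 𝕜] [NormedAddCommGroup H]
    [NormedSpace 𝕜 H] (S : ℝ → H →L[𝕜] H) (B : H →L[𝕜] H) (x₀ : H) :
    (k : ℕ) → (Fin k → ℝ) → H × ℝ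
  | 0, _ => (x₀, 0)
  | k + 1, σ =>
    let p := volterraChain S B x₀ k (σ ∘ Fin.castSucc)
    (B (S (σ (Fin.last k) - p.2) p.1), σ (Fin.last k))

/-- The Volterra kernel `w_k(t, σ₁, …, σ_k) = S(t − σ_k) B S(σ_k − σ_{k−1}) B ⋯ B S(σ₁) x₀`. -/
noncomputable def volterraKernel {𝕜 H : Type*} [RCLike 𝕜] [NormedAddCommGroup H]
    [NormedSpace 𝕜 H] (S : ℝ → H →L[𝕜] H) (B : H →L[𝕜] H) (x₀ : H)
    (t : ℝ) (k : ℕ) (σ : Fin k → ℝ) : H :=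
  S (t - (volterraChain S B x₀ k σ).2) (volterraChain S B x₀ k σ).1

/-- The ordered simplex `{(σ₁, …, σ_k) : 0 ≤ σ₁ ≤ σ₂ ≤ ⋯ ≤ σ_k ≤ t}`. -/
def orderedSimplex (k : ℕ) (t : ℝ) : Set (Fin k → ℝ) :=
  {σ | Monotone σ ∧ ∀ i, σ i ∈ Set.Icc (0 : ℝ) t}

/-- The `k`-th Volterra term
`V_k(t;u) = ∫…∫_{0 ≤ σ₁ ≤ ⋯ ≤ σ_k ≤ t} w_k(t,σ₁,…,σ_k) u(σ₁) ⋯ u(σ_k) dσ₁ ⋯ dσ_k`. -/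
noncomputable def volterraTerm {𝕜 H : Type*} [RCLike 𝕜] [NormedAddCommGroup H]
    [NormedSpace 𝕜 H] [NormedSpace ℝ H] (S : ℝ → H →L[𝕜] H) (B : H →L[𝕜] H) (x₀ : H)
    (t : ℝ) (u : ℝ → ℝ) (k : ℕ) : H :=
  ∫ σ in orderedSimplex k t, (∏ i, u (σ i)) • volterraKernel S B x₀ t k σ


/-!
The exponential bounds telescope along a chain `S(T−σ_k) B ⋯ B S(σ₁) x₀`, so on the simplex every
Volterra kernel of order `k` has norm at most `M (M‖B‖)^k e^{ωT} ‖x₀‖`. Enlarging the simplex to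
the cube `[0,T]^k` and integrating coordinatewise bounds `∫ ∏ |u(σᵢ)|` by `(∫₀^T |u|)^k`, which is
at most `(√T r)^k` by Cauchy–Schwarz. Hence `‖V_k(T;u)‖ ≤ M e^{ωT} ‖x₀‖ q^k` with
`q = M ‖B‖ √T r < 1`, and the terms of order at least two are dominated by a geometric series.
-/

open Set

section PiIntegral

variable {α ι : Type*} [MeasurableSpace α] {μ : Measure α} [SigmaFinite μ] [Fintype ι]
  {f : α → ℝ} {s : Set α}

theorem integrableOn_univ_pi_prod (hf : IntegrableOn f s μ) :
    IntegrableOn (fun x : ι → α => ∏ i, f (x i)) (univ.pi fun _ => s)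
      (Measure.pi fun _ => μ) := by
  rw [IntegrableOn, Measure.restrict_pi_pi]
  exact Integrable.fintype_prod fun _ => hf

theorem setIntegral_prod_le_pow_of_subset_pi (hf₀ : 0 ≤ f) (hf : IntegrableOn f s μ)
    {A : Set (ι → α)} (hA : A ⊆ univ.pi fun _ => s) :
    ∫ x in A, ∏ i, f (x i) ∂Measure.pi (fun _ => μ) ≤ (∫ a in s, f a ∂μ) ^ Fintype.card ι :=
  calc ∫ x in A, ∏ i, f (x i) ∂Measure.pi (fun _ => μ)
      ≤ ∫ x in univ.pi fun _ => s, ∏ i, f (x i) ∂Measure.pi (fun _ => μ) :=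
        setIntegral_mono_set (integrableOn_univ_pi_prod hf)
          (.of_forall fun x => Finset.prod_nonneg fun i _ => hf₀ _) hA.eventuallyLE
    _ = (∫ a in s, f a ∂μ) ^ Fintype.card ι := by
        rw [Measure.restrict_pi_pi, integral_fintype_prod_eq_pow]

end PiIntegral

theorem integral_abs_le_measureReal_rpow_mul {α : Type*} [MeasurableSpace α] {μ : Measure α}
    [IsFiniteMeasure μ] {u : α → ℝ} (hu : MemLp u 2 μ) :
    ∫ a, |u a| ∂μ ≤ (∫ a, u a ^ 2 ∂μ) ^ (1 / 2 : ℝ) * μ.real univ ^ (1 / 2 : ℝ) := by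
  have h := integral_mul_norm_le_Lp_mul_Lq (f := u) (g := fun _ => (1 : ℝ))
    Real.HolderConjugate.two_two (by simpa using hu) (by simpa using memLp_const 1)
  simpa only [norm_one, mul_one, Real.one_rpow, integral_const, smul_eq_mul, Real.norm_eq_abs,
    Real.rpow_two, sq_abs, one_pow] using h

theorem summable_norm_and_tsum_le_of_norm_le_geometric {E : Type*} [NormedAddCommGroup E]
    {f : ℕ → E} {a q : ℝ} (hq₀ : 0 ≤ q) (hq₁ : q < 1) (hf : ∀ k, ‖f k‖ ≤ a * q ^ k) :
    Summable (fun k => ‖f k‖) ∧ ∑' k, ‖f k‖ ≤ a / (1 - q) ∧ ‖∑' k, f k‖ ≤ a / (1 - q) := by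
  have hgeo : HasSum (fun k => a * q ^ k) (a / (1 - q)) := by
    simpa only [div_eq_mul_inv] using (hasSum_geometric_of_lt_one hq₀ hq₁).mul_left a
  have hsum : Summable (fun k => ‖f k‖) :=
    hgeo.summable.of_nonneg_of_le (fun _ => norm_nonneg _) hf
  have htsum : ∑' k, ‖f k‖ ≤ a / (1 - q) := hasSum_le hf hsum.hasSum hgeo
  exact ⟨hsum, htsum, (norm_tsum_le_tsum_norm hsum).trans htsum⟩

theorem measurableSet_orderedSimplex (k : ℕ) (t : ℝ) :
    MeasurableSet (orderedSimplex k t) := by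
  simp only [orderedSimplex, Monotone, ofPred_and, ofPred_forall]
  exact .inter (.iInter fun i => .iInter fun j => .iInter fun _ =>
      measurableSet_le (measurable_pi_apply i) (measurable_pi_apply j))
    (.iInter fun i => measurable_pi_apply i measurableSet_Icc)

section Volterra

variable {𝕜 H : Type*} [RCLike 𝕜] [NormedAddCommGroup H] [NormedSpace 𝕜 H]
  {S : ℝ → H →L[𝕜] H} {M ω : ℝ}

theorem norm_apply_sub_le_of_growth (hS : ∀ s, 0 ≤ s → ‖S s‖ ≤ M * Real.exp (ω * s))
    {s t c : ℝ} (hst : s ≤ t) {y : H} (hy : ‖y‖ ≤ c * Real.exp (ω * s)) :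
    ‖S (t - s) y‖ ≤ M * c * Real.exp (ω * t) := by
  have hS' := hS (t - s) (sub_nonneg.2 hst)
  calc ‖S (t - s) y‖ ≤ ‖S (t - s)‖ * ‖y‖ := (S _).le_opNorm y
    _ ≤ M * Real.exp (ω * (t - s)) * (c * Real.exp (ω * s)) :=
      mul_le_mul hS' hy (norm_nonneg _) ((norm_nonneg _).trans hS')
    _ = M * c * Real.exp (ω * t) := by
      rw [mul_mul_mul_comm, ← Real.exp_add]; congr 2; ring

variable (S) (B : H →L[𝕜] H) (x₀ : H)

theorem volterraChain_snd_mem_Icc {k : ℕ} {σ : Fin k → ℝ} {t : ℝ} (ht : 0 ≤ t)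
    (hσ : ∀ i, σ i ∈ Icc 0 t) : (volterraChain S B x₀ k σ).2 ∈ Icc 0 t := by
  cases k with
  | zero => exact ⟨le_rfl, ht⟩
  | succ k => exact hσ (Fin.last k)

theorem norm_volterraChain_fst_le (hS : ∀ s, 0 ≤ s → ‖S s‖ ≤ M * Real.exp (ω * s))
    {k : ℕ} {σ : Fin k → ℝ} (hmono : Monotone σ) (hpos : ∀ i, 0 ≤ σ i) :
    ‖(volterraChain S B x₀ k σ).1‖ ≤
      (M * ‖B‖) ^ k * ‖x₀‖ * Real.exp (ω * (volterraChain S B x₀ k σ).2) := by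
  induction k with
  | zero => simp [volterraChain]
  | succ k ih =>
    set p := volterraChain S B x₀ k (σ ∘ Fin.castSucc)
    have hp : p.2 ≤ σ (Fin.last k) :=
      (volterraChain_snd_mem_Icc S B x₀ (hpos _)
        fun i => ⟨hpos _, hmono (Fin.le_last _)⟩).2
    have hp₁ := ih (hmono.comp Fin.strictMono_castSucc.monotone) fun i => hpos _
    show ‖B (S (σ (Fin.last k) - p.2) p.1)‖ ≤
      (M * ‖B‖) ^ (k + 1) * ‖x₀‖ * Real.exp (ω * σ (Fin.last k))
    calc ‖B (S (σ (Fin.last k) - p.2) p.1)‖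
        ≤ ‖B‖ * (M * ((M * ‖B‖) ^ k * ‖x₀‖) * Real.exp (ω * σ (Fin.last k))) :=
          B.le_opNorm_of_le (norm_apply_sub_le_of_growth hS hp hp₁)
      _ = (M * ‖B‖) ^ (k + 1) * ‖x₀‖ * Real.exp (ω * σ (Fin.last k)) := by ring

theorem norm_volterraKernel_le (hS : ∀ s, 0 ≤ s → ‖S s‖ ≤ M * Real.exp (ω * s))
    {t : ℝ} (ht : 0 ≤ t) {k : ℕ} {σ : Fin k → ℝ} (hσ : σ ∈ orderedSimplex k t) :
    ‖volterraKernel S B x₀ t k σ‖ ≤ M * ((M * ‖B‖) ^ k * ‖x₀‖) * Real.exp (ω * t) :=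
  norm_apply_sub_le_of_growth hS (volterraChain_snd_mem_Icc S B x₀ ht hσ.2).2
    (norm_volterraChain_fst_le S B x₀ hS hσ.1 fun i => (hσ.2 i).1)

theorem norm_volterraTerm_le [NormedSpace ℝ H]
    (hS : ∀ s, 0 ≤ s → ‖S s‖ ≤ M * Real.exp (ω * s)) {T : ℝ} (hT : 0 ≤ T) {u : ℝ → ℝ}
    (hu : IntegrableOn u (Ioc 0 T)) (k : ℕ) :
    ‖volterraTerm S B x₀ T u k‖ ≤
      M * ((M * ‖B‖) ^ k * ‖x₀‖) * Real.exp (ω * T) * (∫ t in Ioc 0 T, |u t|) ^ k := by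
  have hM : 0 ≤ M := by simpa using (norm_nonneg _).trans (hS 0 le_rfl)
  set C := M * ((M * ‖B‖) ^ k * ‖x₀‖) * Real.exp (ω * T)
  have hu' : IntegrableOn (fun t => |u t|) (Icc 0 T) := (hu.congr_set_ae Ioc_ae_eq_Icc.symm).abs
  have hsub : orderedSimplex k T ⊆ univ.pi fun _ => Icc 0 T := fun σ hσ i _ => hσ.2 i
  have hint : IntegrableOn (fun σ : Fin k → ℝ => ∏ i, |u (σ i)|) (orderedSimplex k T) :=
    (integrableOn_univ_pi_prod hu').mono_set hsub
  have hbound : ∀ σ ∈ orderedSimplex k T,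
      ‖(∏ i, u (σ i)) • volterraKernel S B x₀ T k σ‖ ≤ (∏ i, |u (σ i)|) * C := fun σ hσ => by
    rw [norm_smul, Real.norm_eq_abs, Finset.abs_prod]
    exact mul_le_mul_of_nonneg_left (norm_volterraKernel_le S B x₀ hS hT hσ) (by positivity)
  calc ‖volterraTerm S B x₀ T u k‖
      ≤ ∫ σ in orderedSimplex k T, (∏ i, |u (σ i)|) * C :=
        norm_integral_le_of_norm_le (hint.mul_const C)
          ((ae_restrict_iff' (measurableSet_orderedSimplex k T)).2 (.of_forall hbound))
    _ = (∫ σ in orderedSimplex k T, ∏ i, |u (σ i)|) * C := integral_mul_const _ _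
    _ ≤ (∫ t in Icc 0 T, |u t|) ^ k * C := by
        gcongr
        rw [volume_pi]
        simpa using setIntegral_prod_le_pow_of_subset_pi (fun t => abs_nonneg (u t)) hu' hsub
    _ = C * (∫ t in Ioc 0 T, |u t|) ^ k := by rw [setIntegral_congr_set Ioc_ae_eq_Icc, mul_comm]

end Volterra

theorem stmt_16_general {𝕜 H : Type*} [RCLike 𝕜] [NormedAddCommGroup H] [NormedSpace 𝕜 H]
    [NormedSpace ℝ H]
    (M ω : ℝ) (S : ℝ → H →L[𝕜] H)
    (hS : ∀ s : ℝ, 0 ≤ s → ‖S s‖ ≤ M * Real.exp (ω * s))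
    (B : H →L[𝕜] H) (x₀ : H) (T : ℝ) (hT : 0 < T) (r : ℝ) (u : ℝ → ℝ)
    (hu : MemLp u 2 (volume.restrict (Set.Ioc (0 : ℝ) T)))
    (hur : ((∫ σ in Set.Ioc (0 : ℝ) T, (u σ) ^ 2) ^ (1 / 2 : ℝ)) ≤ r)
    (hsmall : M * ‖B‖ * Real.sqrt T * r < 1) :
    Summable (fun k : ℕ => ‖volterraTerm S B x₀ T u (k + 2)‖) ∧
    (∑' k : ℕ, ‖volterraTerm S B x₀ T u (k + 2)‖) ≤
      M ^ 3 * ‖B‖ ^ 2 * T * Real.exp (ω * T) * r ^ 2 * ‖x₀‖ /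
        (1 - M * ‖B‖ * Real.sqrt T * r) ∧
    ‖∑' k : ℕ, volterraTerm S B x₀ T u (k + 2)‖ ≤
      M ^ 3 * ‖B‖ ^ 2 * T * Real.exp (ω * T) * r ^ 2 * ‖x₀‖ /
        (1 - M * ‖B‖ * Real.sqrt T * r) := by
  have hM : 0 ≤ M := by simpa using (norm_nonneg _).trans (hS 0 le_rfl)
  have hr : 0 ≤ r := (Real.rpow_nonneg (integral_nonneg fun _ => sq_nonneg _) _).trans hur
  have hJ : ∫ t in Ioc 0 T, |u t| ≤ √T * r := by
    have h := integral_abs_le_measureReal_rpow_mul hu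
    rw [measureReal_restrict_apply_univ, Real.volume_real_Ioc_of_le hT.le, sub_zero,
      ← Real.sqrt_eq_rpow T] at h
    calc _ ≤ _ := h
      _ ≤ r * √T := by gcongr
      _ = √T * r := mul_comm _ _
  refine summable_norm_and_tsum_le_of_norm_le_geometric (by positivity) hsmall fun k =>
    (norm_volterraTerm_le S B x₀ hS hT.le (hu.integrable one_le_two) (k + 2)).trans ?_
  calc M * ((M * ‖B‖) ^ (k + 2) * ‖x₀‖) * Real.exp (ω * T) * (∫ t in Ioc 0 T, |u t|) ^ (k + 2)
      ≤ M * ((M * ‖B‖) ^ (k + 2) * ‖x₀‖) * Real.exp (ω * T) * (√T * r) ^ (k + 2) := by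
        gcongr
    _ = M ^ 3 * ‖B‖ ^ 2 * T * Real.exp (ω * T) * r ^ 2 * ‖x₀‖ * (M * ‖B‖ * √T * r) ^ k := by
        rw [pow_add (√T * r), mul_pow √T r 2, Real.sq_sqrt hT.le]
        ring

/-- If `M ‖B‖ √T r < 1` and `‖u‖_{L²(0,T)} ≤ r`, then the series of Volterra terms of order
at least two converges absolutely, `Σ_{k=2}^∞ ‖V_k(T;u)‖` is bounded by
`M³ ‖B‖² T e^{ωT} r² ‖x₀‖ / (1 − M ‖B‖ √T r)`, and the norm of the sum
`F(u) = Σ_{k=2}^∞ V_k(T;u)` obeys the same bound. -/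
theorem stmt_16 {𝕜 H : Type*} [RCLike 𝕜] [NormedAddCommGroup H] [NormedSpace 𝕜 H]
    [NormedSpace ℝ H] [IsScalarTower ℝ 𝕜 H] [CompleteSpace H]
    (M ω : ℝ) (hM : 1 ≤ M) (S : ℝ → H →L[𝕜] H)
    (hScont : ∀ x : H, ContinuousOn (fun s => S s x) (Set.Ici (0 : ℝ)))
    (hS : ∀ s : ℝ, 0 ≤ s → ‖S s‖ ≤ M * Real.exp (ω * s))
    (B : H →L[𝕜] H) (x₀ : H) (T : ℝ) (hT : 0 < T) (r : ℝ) (hr : 0 < r) (u : ℝ → ℝ)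
    (hu : MemLp u 2 (volume.restrict (Set.Ioc (0 : ℝ) T)))
    (hur : ((∫ σ in Set.Ioc (0 : ℝ) T, (u σ) ^ 2) ^ (1 / 2 : ℝ)) ≤ r)
    (hsmall : M * ‖B‖ * Real.sqrt T * r < 1) :
    Summable (fun k : ℕ => ‖volterraTerm S B x₀ T u (k + 2)‖) ∧
    (∑' k : ℕ, ‖volterraTerm S B x₀ T u (k + 2)‖) ≤
      M ^ 3 * ‖B‖ ^ 2 * T * Real.exp (ω * T) * r ^ 2 * ‖x₀‖ /
        (1 - M * ‖B‖ * Real.sqrt T * r) ∧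
    ‖∑' k : ℕ, volterraTerm S B x₀ T u (k + 2)‖ ≤
      M ^ 3 * ‖B‖ ^ 2 * T * Real.exp (ω * T) * r ^ 2 * ‖x₀‖ /
        (1 - M * ‖B‖ * Real.sqrt T * r) :=
  stmt_16_general M ω S hS B x₀ T hT r u hu hur hsmall
end
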